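/- arXiv:2510.05352 — 4 statements merged into one kernel-verified Lean document; each statement's English description precedes it below -/
import Mathlib

section
/- The probabilities P(X = i) = C(d,i)·(i+1)!/(d+1)^{i+1} for i ∈ {0,1,...,d} sum to 1, i.e., Σ_{i=0}^{d} C(d,i)·(i+1)!/(d+1)^{i+1} = 1. -/
open Finset

theorem offspring_law_sums_to_one (d : ℕ) (hd : 2 ≤ d) :
    ∑ i ∈ Finset.range (d + 1),
      (d.choose i : ℝ) * (Nat.factorial (i + 1) : ℝ) / ((d : ℝ) + 1) ^ (i + 1) = 1 := by
  have hpos : (0:ℝ) < (d:ℝ) + 1 := by positivity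
  have h : ∀ i ∈ Finset.range (d + 1),
      (d.choose i : ℝ) * (Nat.factorial (i + 1) : ℝ) / ((d : ℝ) + 1) ^ (i + 1)
      = (d.descFactorial i : ℝ) / ((d:ℝ)+1)^i
        - (d.descFactorial (i+1) : ℝ) / ((d:ℝ)+1)^(i+1) := by
    intro i hi
    rw [Finset.mem_range, Nat.lt_succ_iff] at hi
    have h1 : (d.descFactorial (i+1) : ℝ) = ((d:ℝ) - i) * d.descFactorial i := by
      rw [Nat.descFactorial_succ]
      push_cast [hi]
      ring
    have h2 : (d.descFactorial i : ℝ) = (Nat.factorial i : ℝ) * d.choose i := by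
      rw [Nat.descFactorial_eq_factorial_mul_choose]; push_cast; ring
    have h3 : (Nat.factorial (i+1) : ℝ) = (i+1) * Nat.factorial i := by
      rw [Nat.factorial_succ]; push_cast; ring
    rw [h1, h2, h3]
    field_simp
    ring
  rw [Finset.sum_congr rfl h, Finset.sum_range_sub' (fun i => (d.descFactorial i : ℝ) / ((d:ℝ)+1)^i)]
  have : d.descFactorial (d+1) = 0 := Nat.descFactorial_eq_zero_iff_lt.2 (Nat.lt_succ_self d)
  simp [this]
end

section
/- For d ≥ 2, the mean of the offspring distribution P(X=i) = C(d,i)·(i+1)!/(d+1)^{i+1}, i ∈ {0,...,d}, equals (d·e^{d+1}/(d+1)^d)·Γ(d,d+1), i.e., Σ_{i=0}^{d} i·C(d,i)·(i+1)!/(d+1)^{i+1} = (d·e^{d+1}/(d+1)^d)·Γ(d,d+1), where Γ(d,d+1) = (d-1)!·e^{-(d+1)}·Σ_{j=0}^{d-1}(d+1)^j/j!. -/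
open Finset Real

/-- Incomplete gamma function at natural arguments. -/
noncomputable def incGamma (m : ℕ) (n : ℝ) : ℝ :=
  (Nat.factorial (m - 1) : ℝ) * Real.exp (-n) *
    ∑ i ∈ Finset.range m, n ^ i / (Nat.factorial i : ℝ)

private lemma key_telescope (d j : ℕ) :
    (((d:ℝ) - j) * (((d:ℝ) - j) + 1) - ((d:ℝ) + 1)) * (((d:ℝ)+1)^j / (Nat.factorial j : ℝ))
      = (((j:ℝ)+1) * ((d:ℝ) - ((j:ℝ)+1)) * (((d:ℝ)+1)^(j+1) / (Nat.factorial (j+1) : ℝ)))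
        - ((j:ℝ) * ((d:ℝ) - (j:ℝ)) * (((d:ℝ)+1)^j / (Nat.factorial j : ℝ))) := by
  have h1 : (Nat.factorial (j+1) : ℝ) = ((j:ℝ)+1) * (Nat.factorial j : ℝ) := by
    push_cast [Nat.factorial_succ]; ring
  have h2 : (Nat.factorial j : ℝ) ≠ 0 := Nat.cast_ne_zero.2 (Nat.factorial_ne_zero j)
  rw [h1, pow_succ]
  field_simp
  ring

private lemma term_eq (d j : ℕ) (hj : j ≤ d) :
    ((d - j : ℕ):ℝ) * (d.choose (d-j) : ℝ) * ((Nat.factorial (d-j+1)) : ℝ)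
        * ((d:ℝ)+1) ^ (d - (d-j))
      = (Nat.factorial d : ℝ) *
          ((((d:ℝ)-j) * (((d:ℝ)-j)+1)) * (((d:ℝ)+1)^j / (Nat.factorial j : ℝ))) := by
  have h1 : d - (d - j) = j := by omega
  rw [h1, Nat.choose_symm hj]
  have hfac : (d.choose j : ℝ) * (Nat.factorial j : ℝ) * (Nat.factorial (d-j) : ℝ)
      = (Nat.factorial d : ℝ) := by
    exact_mod_cast congrArg (Nat.cast (R := ℝ)) (Nat.choose_mul_factorial_mul_factorial hj)
  have hf1 : ((Nat.factorial (d-j+1)) : ℝ)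
      = (((d:ℝ)-j)+1) * ((Nat.factorial (d-j)) : ℝ) := by
    rw [Nat.factorial_succ]
    push_cast [Nat.cast_sub hj]
    ring
  have h2 : (Nat.factorial j : ℝ) ≠ 0 := Nat.cast_ne_zero.2 (Nat.factorial_ne_zero j)
  rw [Nat.cast_sub hj, hf1, ← hfac]
  field_simp

theorem offspring_mean_eq (d : ℕ) (hd : 2 ≤ d) :
    ∑ i ∈ Finset.range (d + 1),
        (i : ℝ) * (d.choose i : ℝ) * (Nat.factorial (i + 1) : ℝ) / ((d : ℝ) + 1) ^ (i + 1)
      = (d : ℝ) * Real.exp ((d : ℝ) + 1) / ((d : ℝ) + 1) ^ d * incGamma d ((d : ℝ) + 1) := by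
  have hd1 : 1 ≤ d := le_trans one_le_two hd
  set x : ℝ := (d:ℝ) + 1 with hxdef
  have hx0 : x ≠ 0 := by positivity
  have hxpow : x ^ (d+1) ≠ 0 := pow_ne_zero _ hx0
  apply mul_right_cancel₀ hxpow
  rw [Finset.sum_mul]
  -- Left side: clear denominators
  have hL : ∀ i ∈ Finset.range (d+1),
      (i : ℝ) * (d.choose i : ℝ) * (Nat.factorial (i + 1) : ℝ) / x ^ (i + 1) * x ^ (d+1)
      = (i : ℝ) * (d.choose i : ℝ) * (Nat.factorial (i + 1) : ℝ) * x ^ (d - i) := by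
    intro i hi
    have hid : i ≤ d := Nat.lt_succ_iff.mp (Finset.mem_range.mp hi)
    have hsplit : x ^ (d+1) = x ^ (i+1) * x ^ (d-i) := by
      rw [← pow_add]; congr 1; omega
    rw [hsplit, ← mul_assoc, div_mul_cancel₀ _ (pow_ne_zero _ hx0)]
  rw [Finset.sum_congr rfl hL]
  -- reflect the sum
  rw [← Finset.sum_range_reflect]
  have hR : ∀ j ∈ Finset.range (d+1),
      ((d + 1 - 1 - j : ℕ) : ℝ) * (d.choose (d + 1 - 1 - j) : ℝ)
          * (Nat.factorial (d + 1 - 1 - j + 1) : ℝ) * x ^ (d - (d + 1 - 1 - j))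
      = (Nat.factorial d : ℝ) *
          ((((d:ℝ)-j) * (((d:ℝ)-j)+1)) * (x^j / (Nat.factorial j : ℝ))) := by
    intro j hj
    have hjd : j ≤ d := Nat.lt_succ_iff.mp (Finset.mem_range.mp hj)
    have h0 : d + 1 - 1 - j = d - j := by omega
    rw [h0]
    exact term_eq d j hjd
  rw [Finset.sum_congr rfl hR, ← Finset.mul_sum]
  -- Right side simplification
  rw [incGamma]
  have hexp : Real.exp x * Real.exp (-x) = 1 := by
    rw [← Real.exp_add, add_neg_cancel, Real.exp_zero]
  have hdfac : (d:ℝ) * (Nat.factorial (d-1) : ℝ) = (Nat.factorial d : ℝ) := by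
    exact_mod_cast congrArg (Nat.cast (R := ℝ)) (Nat.mul_factorial_pred (by omega))
  have hxp : x ^ (d+1) = x ^ d * x := pow_succ x d
  have hpd : (x:ℝ) ^ d ≠ 0 := pow_ne_zero _ hx0
  have hRHS : (d : ℝ) * Real.exp x / x ^ d *
        ((Nat.factorial (d - 1) : ℝ) * Real.exp (-x) *
          ∑ i ∈ Finset.range d, x ^ i / (Nat.factorial i : ℝ)) * x ^ (d+1)
      = (Nat.factorial d : ℝ) *
          ∑ i ∈ Finset.range d, x * (x ^ i / (Nat.factorial i : ℝ)) := by
    set S := ∑ i ∈ Finset.range d, x ^ i / (Nat.factorial i : ℝ) with hS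
    rw [hxp]
    have hring : (d : ℝ) * Real.exp x / x ^ d *
        ((Nat.factorial (d - 1) : ℝ) * Real.exp (-x) * S) * (x ^ d * x)
      = ((d:ℝ) * (Nat.factorial (d-1):ℝ)) *
          ((Real.exp x * Real.exp (-x)) * ((x^d / x^d) * (x * S))) := by
      ring
    rw [hring, hexp, div_self hpd, hdfac, one_mul, one_mul, hS, Finset.mul_sum]
  rw [hRHS]
  congr 1
  -- remaining sum identity
  rw [Finset.sum_range_succ]
  have hz : ((d:ℝ) - (d:ℕ)) = 0 := by simp
  rw [hz]
  simp only [zero_mul, mul_zero, zero_add, add_zero]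
  rw [← sub_eq_zero, ← Finset.sum_sub_distrib]
  have hterm : ∀ j ∈ Finset.range d,
      (((d:ℝ)-j) * (((d:ℝ)-j)+1)) * (x^j / (Nat.factorial j : ℝ))
        - x * (x ^ j / (Nat.factorial j : ℝ))
      = (fun k : ℕ => (k:ℝ) * ((d:ℝ) - (k:ℝ)) * (x^k / (Nat.factorial k : ℝ))) (j+1)
        - (fun k : ℕ => (k:ℝ) * ((d:ℝ) - (k:ℝ)) * (x^k / (Nat.factorial k : ℝ))) j := by
    intro j _
    simp only [hxdef]
    push_cast
    rw [← key_telescope d j]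
    ring
  rw [Finset.sum_congr rfl hterm,
    Finset.sum_range_sub (fun k : ℕ => (k:ℝ) * ((d:ℝ) - (k:ℝ)) * (x^k / (Nat.factorial k : ℝ))) d]
  simp
end

section
/- For d ≥ 3, the mean E(X) = Σ_{i=0}^{d} i·C(d,i)·(i+1)!/(d+1)^{i+1} is strictly greater than 1; for d = 2 it is at most 1. -/
/-! `P(X = i)` telescopes as `P(X ≥ i) - P(X ≥ i + 1)` with `P(X ≥ i) = C(d,i) i! / (d+1)^i`, so the
weights sum to `1` and `E X - 1 = ∑ (i - 1) P(X = i) ≥ P(X = 2) - P(X = 0) = (2d² - 5d - 1) / (d+1)³`,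
which is positive for `d ≥ 3`. The case `d = 2` is a direct computation (`E X = 8/9`). -/

open Finset
open scoped Nat

theorem one_lt_sum_mul_of_apply_zero_lt_apply_two {n : ℕ} {p : ℕ → ℝ} (hn : 2 ≤ n)
    (hp : ∀ i, 0 ≤ p i) (hsum : ∑ i ∈ range (n + 1), p i = 1) (hlt : p 0 < p 2) :
    1 < ∑ i ∈ range (n + 1), (i : ℝ) * p i := by
  have hcenter : ∑ i ∈ range (n + 1), (i : ℝ) * p i - 1 =
      ∑ i ∈ range (n + 1), ((i : ℝ) - 1) * p i := by
    simp only [sub_mul, one_mul, sum_sub_distrib, hsum]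
  have hhead : ∑ i ∈ range 3, ((i : ℝ) - 1) * p i ≤
      ∑ i ∈ range (n + 1), ((i : ℝ) - 1) * p i := by
    refine sum_le_sum_of_subset_of_nonneg (range_subset_range.2 (by omega)) fun i _ hi => ?_
    have : (3 : ℝ) ≤ i := by exact_mod_cast not_lt.1 (mem_range.not.1 hi)
    exact mul_nonneg (by linarith) (hp i)
  have hhead_eq : ∑ i ∈ range 3, ((i : ℝ) - 1) * p i = p 2 - p 0 := by
    norm_num [sum_range_succ, neg_add_eq_sub]
  linarith

theorem succ_mul_choose_mul_factorial (d i : ℕ) :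
    (d + 1) * (d.choose i * i !) = (d.choose i + d.choose (i + 1)) * (i + 1)! := by
  have h := Nat.add_one_mul_choose_eq d i
  rw [Nat.choose_succ_succ] at h
  rw [← mul_assoc, h, Nat.factorial_succ]
  ring

noncomputable def offspringProb (d i : ℕ) : ℝ := d.choose i * (i + 1)! / ((d : ℝ) + 1) ^ (i + 1)

noncomputable def offspringTail (d i : ℕ) : ℝ := d.choose i * i ! / ((d : ℝ) + 1) ^ i

theorem offspringProb_eq_tail_sub (d i : ℕ) :
    offspringProb d i = offspringTail d i - offspringTail d (i + 1) := by
  have key : ((d : ℝ) + 1) * (d.choose i * i !) = (d.choose i + d.choose (i + 1)) * (i + 1)! := by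
    exact_mod_cast succ_mul_choose_mul_factorial d i
  unfold offspringProb offspringTail
  rw [eq_sub_iff_add_eq, ← add_div, div_eq_div_iff (by positivity) (by positivity), pow_succ]
  linear_combination (-((d : ℝ) + 1) ^ i) * key

theorem offspringProb_nonneg (d i : ℕ) : 0 ≤ offspringProb d i := by
  unfold offspringProb; positivity

theorem sum_offspringProb (d : ℕ) : ∑ i ∈ range (d + 1), offspringProb d i = 1 := by
  simp only [offspringProb_eq_tail_sub, sum_range_sub', offspringTail]
  simp [Nat.choose_succ_self]

theorem offspringProb_zero_lt_two {d : ℕ} (hd : 3 ≤ d) :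
    offspringProb d 0 < offspringProb d 2 := by
  have hd' : (3 : ℝ) ≤ d := by exact_mod_cast hd
  simp only [offspringProb, Nat.cast_choose_two]
  rw [div_lt_div_iff₀ (by positivity) (by positivity)]
  norm_num [Nat.factorial]
  nlinarith [mul_le_mul hd' hd' (by norm_num) (by linarith)]

theorem offspring_mean_gt_one_iff :
    (∀ d : ℕ, 3 ≤ d →
      1 < ∑ i ∈ Finset.range (d + 1),
            (i : ℝ) * (d.choose i : ℝ) * (Nat.factorial (i + 1) : ℝ) / ((d : ℝ) + 1) ^ (i + 1))
    ∧ (∑ i ∈ Finset.range (2 + 1),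
          (i : ℝ) * ((2 : ℕ).choose i : ℝ) * (Nat.factorial (i + 1) : ℝ)
            / ((2 : ℝ) + 1) ^ (i + 1) ≤ 1) := by
  refine ⟨fun d hd => ?_, by norm_num [sum_range_succ, Nat.factorial]⟩
  convert one_lt_sum_mul_of_apply_zero_lt_apply_two (by omega) (offspringProb_nonneg d)
    (sum_offspringProb d) (offspringProb_zero_lt_two hd) using 3 with i
  rw [offspringProb, mul_assoc, mul_div_assoc]
end

section
/- As d → ∞, β(d) := (e^{d+1}·Γ(d,d+1) − (d-1)!)/(d+1)^d satisfies β(d) ~ sqrt(π/(2d)), i.e., lim_{d→∞} β(d)·sqrt(2d/π) = 1. -/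
open Finset Real Filter

/-- Probability a non-root spreader contacts a fixed neighbor before stifling. -/
noncomputable def beta (d : ℕ) : ℝ :=
  (Real.exp ((d : ℝ) + 1) * incGamma d ((d : ℝ) + 1) - (Nat.factorial (d - 1) : ℝ)) /
    ((d : ℝ) + 1) ^ d

/-!
Substituting `t = (d + 1)(1 + s)` in the incomplete gamma integral gives
`β(d) = ∫₀^∞ (1 + s)^(d-1) e^{-(d+1)s} ds - (d-1)!/(d+1)^d`, and the last term is `O(1/d)`.
After the rescaling `s = u/√d` the integrand is `exp((d-1)(log(1+x) - x) - 2x)` with `x = u/√d`;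
it tends to `exp(-u²/2)` and is dominated by `exp(1/2 - u/4)`, so by dominated convergence
`√d ∫₀^∞ (1 + s)^(d-1) e^{-(d+1)s} ds → ∫₀^∞ e^{-u²/2} du = √(π/2)` (Laplace's method).
-/

open MeasureTheory Set Topology
open scoped Nat

theorem hasDerivAt_sum_range_pow_div_factorial (m : ℕ) (x : ℝ) :
    HasDerivAt (fun x : ℝ => ∑ i ∈ Finset.range (m + 1), x ^ i / (i ! : ℝ))
      (∑ i ∈ Finset.range m, x ^ i / (i ! : ℝ)) x := by
  induction m with
  | zero => simpa using hasDerivAt_const x (1 : ℝ)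
  | succ m ih =>
    refine (ih.add ((hasDerivAt_pow (m + 1) x).div_const ((m + 1)! : ℝ))).congr_deriv ?_
      |>.congr_of_eventuallyEq (.of_forall fun y => Finset.sum_range_succ _ _)
    rw [Finset.sum_range_succ _ m]
    push_cast [Nat.factorial_succ]
    field_simp

theorem hasDerivAt_incGamma_succ (m : ℕ) (x : ℝ) :
    HasDerivAt (incGamma (m + 1)) (-(x ^ m * exp (-x))) x := by
  have hexp : HasDerivAt (fun x : ℝ => exp (-x)) (-exp (-x)) x := by
    simpa using (hasDerivAt_neg x).exp
  have := (hexp.const_mul (m ! : ℝ)).mul (hasDerivAt_sum_range_pow_div_factorial m x)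
  refine this.congr_deriv ?_ |>.congr_of_eventuallyEq (.of_forall fun y => ?_)
  · rw [Finset.sum_range_succ]
    field_simp
    ring
  · simp [incGamma]

theorem tendsto_incGamma_atTop (m : ℕ) : Tendsto (incGamma m) atTop (𝓝 0) := by
  have hterm (i : ℕ) : Tendsto (fun x : ℝ => x ^ i * exp (-x) / (i ! : ℝ)) atTop (𝓝 0) := by
    simpa using (tendsto_pow_mul_exp_neg_atTop_nhds_zero i).div_const (i ! : ℝ)
  have := (tendsto_finsetSum (Finset.range m) fun i _ => hterm i).const_mul ((m - 1)! : ℝ)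
  simp only [Finset.sum_const_zero, mul_zero] at this
  refine this.congr fun x => ?_
  simp only [incGamma, Finset.mul_sum, mul_div_assoc']
  exact Finset.sum_congr rfl fun i _ => by ring

theorem integral_one_add_pow_mul_exp_neg_mul (m : ℕ) {a : ℝ} (ha : 0 < a) :
    ∫ s in Ioi 0, (1 + s) ^ m * exp (-(a * s)) = exp a * incGamma (m + 1) a / a ^ (m + 1) := by
  have hderiv (s : ℝ) : HasDerivAt (fun s => -incGamma (m + 1) (a * (1 + s)))
      (a ^ (m + 1) * exp (-a) * ((1 + s) ^ m * exp (-(a * s)))) s := by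
    have hinner : HasDerivAt (fun s : ℝ => a * (1 + s)) a s := by
      simpa using ((hasDerivAt_id s).const_add 1).const_mul a
    refine ((hasDerivAt_incGamma_succ m (a * (1 + s))).comp s hinner).neg.congr_deriv ?_
    rw [mul_pow, pow_succ, show -(a * (1 + s)) = -a + -(a * s) by ring, exp_add]
    ring
  have hlim : Tendsto (fun s => -incGamma (m + 1) (a * (1 + s))) atTop (𝓝 0) := by
    have hinner : Tendsto (fun s : ℝ => a * (1 + s)) atTop atTop :=
      (tendsto_atTop_add_const_left _ 1 tendsto_id).const_mul_atTop ha
    exact neg_zero (G := ℝ) ▸ ((tendsto_incGamma_atTop (m + 1)).comp hinner).neg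
  have := integral_Ioi_of_hasDerivAt_of_nonneg' (fun s _ => hderiv s)
    (fun s hs => by have : (0:ℝ) < s := hs; positivity) hlim
  rw [integral_const_mul] at this
  simp only [add_zero, mul_one, zero_sub, neg_neg] at this
  generalize (∫ s in Ioi 0, (1 + s) ^ m * exp (-(a * s))) = I at this ⊢
  rw [← this, exp_neg]
  field_simp

theorem log_one_add_le_sub_sq_div {x : ℝ} (hx : 0 ≤ x) :
    log (1 + x) ≤ x - x ^ 2 / (2 * (2 + x)) := by
  -- with `w = √(1 + x)`: `log (1 + x) = 2 log w ≤ 2 (w - 1) = x - (w - 1) ^ 2`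
  set w := √(1 + x)
  have hw : w ^ 2 = 1 + x := Real.sq_sqrt (by linarith)
  have hlog : log (1 + x) ≤ 2 * (w - 1) := by
    rw [← hw, Real.log_pow]
    push_cast
    linarith [Real.log_le_sub_one_of_pos (by positivity : 0 < w)]
  have hsq : x ^ 2 / (2 * (2 + x)) ≤ (w - 1) ^ 2 := by
    rw [div_le_iff₀ (by positivity)]
    have hx' : x = w ^ 2 - 1 := by linarith
    rw [hx']
    nlinarith [pow_two_nonneg ((w - 1) ^ 2)]
  nlinarith

theorem tendsto_mul_log_one_add_sub_self {α : Type*} {l : Filter α} {a x : α → ℝ} {L : ℝ}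
    (hx : Tendsto x l (𝓝 0)) (hax : Tendsto (fun t => a t * x t ^ 2) l (𝓝 L)) :
    Tendsto (fun t => a t * (log (1 + x t) - x t)) l (𝓝 (-(L / 2))) := by
  have hrem : Tendsto (fun t => a t * (log (1 + x t) - x t + x t ^ 2 / 2)) l (𝓝 0) := by
    refine squeeze_zero_norm' ?_ (by simpa using ((hax.abs.mul hx.abs).const_mul 2))
    filter_upwards [hx.abs.eventually_lt_const (by norm_num : |(0 : ℝ)| < 1 / 2)] with t ht
    have hlog := Real.abs_log_sub_add_sum_range_le (x := -x t) (by rw [abs_neg]; linarith) 2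
    norm_num [Finset.sum_range_succ] at hlog
    have hbound : |log (1 + x t) - x t + x t ^ 2 / 2| ≤ 2 * |x t| ^ 3 := by
      calc _ = |-x t + x t ^ 2 / 2 + log (1 + x t)| := by ring_nf
        _ ≤ |x t| ^ 3 / (1 - |x t|) := hlog
        _ ≤ 2 * |x t| ^ 3 := by
          rw [div_le_iff₀ (by linarith)]
          nlinarith [pow_nonneg (abs_nonneg (x t)) 3]
    rw [Real.norm_eq_abs, abs_mul]
    calc |a t| * |log (1 + x t) - x t + x t ^ 2 / 2| ≤ |a t| * (2 * |x t| ^ 3) := by gcongr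
      _ = 2 * (|a t| * x t ^ 2 * |x t|) := by rw [← sq_abs (x t)]; ring
  simpa using hrem.sub (hax.div_const 2) |>.congr fun t => by ring

theorem integral_exp_neg_sq_div_two_Ioi : ∫ u in Ioi 0, exp (-(u ^ 2 / 2)) = √(π / 2) := by
  calc ∫ u in Ioi 0, exp (-(u ^ 2 / 2)) = ∫ u in Ioi 0, exp (-(1 / 2) * u ^ 2) := by
        simp_rw [neg_mul, one_div_mul_eq_div]
    _ = √(π / (1 / 2)) / 2 := integral_gaussian_Ioi _
    _ = √(π / 2) := by
        rw [show π / (1 / 2) = 2 ^ 2 * (π / 2) by ring, Real.sqrt_mul (by positivity),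
          Real.sqrt_sq (by norm_num)]
        ring

noncomputable def betaIntegrand (d : ℕ) (s : ℝ) : ℝ := (1 + s) ^ (d - 1) * exp (-((d + 1) * s))

theorem beta_eq_integral_sub {d : ℕ} (hd : 1 ≤ d) :
    beta d = (∫ s in Ioi 0, betaIntegrand d s) - ((d - 1)! : ℝ) / ((d : ℝ) + 1) ^ d := by
  have h := integral_one_add_pow_mul_exp_neg_mul (d - 1) (a := (d : ℝ) + 1) (by positivity)
  rw [Nat.sub_add_cancel hd] at h
  simp only [betaIntegrand, h, beta]
  ring

theorem sqrt_mul_factorial_div_pow_le (d : ℕ) :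
    √d * ((d - 1)! / ((d : ℝ) + 1) ^ d) ≤ (√d)⁻¹ := by
  rcases Nat.eq_zero_or_pos d with rfl | hd
  · simp
  have hfac : (d : ℝ) * (d - 1)! ≤ ((d : ℝ) + 1) ^ d := by
    have : d * (d - 1)! ≤ d ^ d := by
      rw [Nat.mul_factorial_pred hd.ne']; exact Nat.factorial_le_pow d
    calc (d : ℝ) * (d - 1)! ≤ (d : ℝ) ^ d := by exact_mod_cast this
      _ ≤ ((d : ℝ) + 1) ^ d := by gcongr; linarith
  rw [mul_div_assoc', div_le_iff₀ (by positivity)]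
  field_simp
  rwa [Real.sq_sqrt (Nat.cast_nonneg _)]

theorem tendsto_sqrt_mul_factorial_div_pow :
    Tendsto (fun d : ℕ => √d * ((d - 1)! / ((d : ℝ) + 1) ^ d)) atTop (𝓝 0) :=
  squeeze_zero (fun d => by positivity) sqrt_mul_factorial_div_pow_le
    (tendsto_inv_atTop_zero.comp (tendsto_sqrt_atTop.comp tendsto_natCast_atTop_atTop))

theorem betaIntegrand_eq_exp {d : ℕ} (hd : 1 ≤ d) {s : ℝ} (hs : -1 < s) :
    betaIntegrand d s = exp ((d - 1) * (log (1 + s) - s) - 2 * s) := by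
  have hpow : (1 + s) ^ (d - 1) = exp ((d - 1 : ℕ) * log (1 + s)) := by
    rw [Real.exp_nat_mul, Real.exp_log (by linarith)]
  rw [betaIntegrand, hpow, ← exp_add, Nat.cast_sub hd, Nat.cast_one]
  congr 1
  ring

theorem betaIntegrand_div_sqrt_le {d : ℕ} (hd : 2 ≤ d) {u : ℝ} (hu : 0 ≤ u) :
    betaIntegrand d (u / √d) ≤ exp (1 / 2 - u / 4) := by
  set x := u / √d
  have hd' : (2 : ℝ) ≤ d := by exact_mod_cast hd
  have hx : 0 ≤ x := by positivity
  have hxu : x ≤ u := div_le_self hu (Real.one_le_sqrt.mpr (by linarith))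
  have hx2 : u ^ 2 / 2 ≤ (d - 1) * x ^ 2 := by
    rw [div_pow, Real.sq_sqrt (by linarith), mul_div_assoc', le_div_iff₀ (by linarith)]
    nlinarith [sq_nonneg u]
  rw [betaIntegrand_eq_exp (by omega) (by linarith), exp_le_exp]
  have hlog : log (1 + x) - x ≤ -(x ^ 2 / (2 * (2 + x))) := by
    linarith [log_one_add_le_sub_sq_div hx]
  calc (d - 1) * (log (1 + x) - x) - 2 * x ≤ -((d - 1) * x ^ 2 / (2 * (2 + x))) := by
        rw [mul_div_assoc, ← mul_neg]
        nlinarith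
    _ ≤ -(u ^ 2 / 2 / (2 * (2 + u))) := by
        gcongr
        exact mul_nonneg (by linarith) (sq_nonneg x)
    _ ≤ 1 / 2 - u / 4 := by
        rw [neg_le, div_div, le_div_iff₀ (by positivity)]
        nlinarith

theorem tendsto_betaIntegrand_div_sqrt {u : ℝ} (hu : 0 ≤ u) :
    Tendsto (fun d : ℕ => betaIntegrand d (u / √d)) atTop (𝓝 (exp (-(u ^ 2 / 2)))) := by
  have hsqrt : Tendsto (fun d : ℕ => √(d : ℝ)) atTop atTop :=
    tendsto_sqrt_atTop.comp tendsto_natCast_atTop_atTop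
  have hx : Tendsto (fun d : ℕ => u / √d) atTop (𝓝 0) := tendsto_const_nhds.div_atTop hsqrt
  have hax : Tendsto (fun d : ℕ => ((d : ℝ) - 1) * (u / √d) ^ 2) atTop (𝓝 (u ^ 2)) := by
    have := tendsto_const_nhds (x := u ^ 2) |>.sub (tendsto_const_div_atTop_nhds_zero_nat (u ^ 2))
    rw [sub_zero] at this
    refine this.congr' ?_
    filter_upwards [eventually_ge_atTop 1] with d hd
    have hd' : (0 : ℝ) < d := by exact_mod_cast hd
    rw [div_pow, Real.sq_sqrt hd'.le]
    field_simp
  have hexp := (tendsto_mul_log_one_add_sub_self hx hax).sub (hx.const_mul 2)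
  rw [mul_zero, sub_zero] at hexp
  refine ((continuous_exp.tendsto _).comp hexp).congr' ?_
  filter_upwards [eventually_ge_atTop 1] with d hd
  rw [betaIntegrand_eq_exp hd (by linarith [show 0 ≤ u / √d by positivity])]
  rfl

theorem sqrt_mul_integral_betaIntegrand {d : ℕ} (hd : 0 < d) :
    √d * ∫ s in Ioi 0, betaIntegrand d s = ∫ u in Ioi 0, betaIntegrand d (u / √d) := by
  have hsd : 0 < (√d)⁻¹ := by positivity
  simp_rw [div_eq_inv_mul _ (√(d : ℝ)), integral_comp_mul_left_Ioi (betaIntegrand d) 0 hsd,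
    mul_zero, inv_inv, smul_eq_mul]

theorem tendsto_sqrt_mul_integral_betaIntegrand :
    Tendsto (fun d : ℕ => √d * ∫ s in Ioi 0, betaIntegrand d s) atTop (𝓝 √(π / 2)) := by
  have hdom : Tendsto (fun d : ℕ => ∫ u in Ioi 0, betaIntegrand d (u / √d)) atTop
      (𝓝 (∫ u in Ioi 0, exp (-(u ^ 2 / 2)))) := by
    refine tendsto_integral_filter_of_dominated_convergence (fun u => exp (1 / 2 - u / 4))
      (.of_forall fun d => ?_) ?_ ?_ ?_
    · exact (Continuous.aestronglyMeasurable (by unfold betaIntegrand; fun_prop))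
    · filter_upwards [eventually_ge_atTop 2] with d hd
      filter_upwards [ae_restrict_mem measurableSet_Ioi] with u hu
      rw [Real.norm_of_nonneg (by unfold betaIntegrand; have : (0 : ℝ) < u := hu; positivity)]
      exact betaIntegrand_div_sqrt_le hd (le_of_lt hu)
    · refine IntegrableOn.congr_fun ((exp_neg_integrableOn_Ioi 0
        (by norm_num : (0 : ℝ) < 1 / 4)).const_mul (exp (1 / 2))) (fun u _ => ?_) measurableSet_Ioi
      rw [← exp_add]; ring_nf
    · filter_upwards [ae_restrict_mem measurableSet_Ioi] with u hu
      exact tendsto_betaIntegrand_div_sqrt (le_of_lt hu)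
  rw [integral_exp_neg_sq_div_two_Ioi] at hdom
  refine hdom.congr' ?_
  filter_upwards [eventually_gt_atTop 0] with d hd
  exact (sqrt_mul_integral_betaIntegrand hd).symm

theorem beta_asymptotic :
    Tendsto (fun d : ℕ => beta d * Real.sqrt (2 * (d : ℝ) / Real.pi)) atTop (nhds 1) := by
  have hlim := (tendsto_sqrt_mul_integral_betaIntegrand.sub
    tendsto_sqrt_mul_factorial_div_pow).const_mul √(2 / π)
  rw [sub_zero, ← Real.sqrt_mul (by positivity), div_mul_div_cancel₀ (by positivity),
    div_self (by positivity), Real.sqrt_one] at hlim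
  refine hlim.congr' ?_
  filter_upwards [eventually_ge_atTop 1] with d hd
  rw [beta_eq_integral_sub hd, show 2 * (d : ℝ) / π = 2 / π * d by ring,
    Real.sqrt_mul (by positivity)]
  ring
end
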